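/- arXiv:1908.05536 — 4 statements merged into one kernel-verified Lean document; each statement's English description precedes it below -/
import Mathlib

section
/- In the semidihedral group SD_{2^n} with n ≥ 4, every subgroup Q of order at least 8 contains an element of the cyclic subgroup ⟨x⟩ distinct from the identity and from the central involution z = x^{2^{n-2}}. -/
/-!
Only the index of `⟨x⟩` matters: `|⟨x⟩| = 2^(n-1)` is half of `|G| = 2^n`, so for any subgroup `Q`
we have `|Q| ≤ 2 · |⟨x⟩ ∩ Q|`. When `|Q| ≥ 8` the intersection has at least four elements, so it
cannot consist of `1` and `z` alone.
-/

open Subgroup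

theorem Set.exists_mem_ne_ne_of_two_lt_ncard {α : Type*} {s : Set α} (hs : 2 < s.ncard) (a b : α) :
    ∃ g ∈ s, g ≠ a ∧ g ≠ b := by
  by_contra! h
  have hsub : s ⊆ {a, b} := fun g hg ↦ by
    by_cases hga : g = a
    · exact Or.inl hga
    · exact Or.inr (h g hg hga)
  have hpair : ({a, b} : Set α).ncard ≤ 2 :=
    (Set.ncard_insert_le a {b}).trans_eq (by rw [Set.ncard_singleton])
  have := Set.ncard_le_ncard hsub
  omega

theorem Subgroup.card_le_index_mul_card_inf {G : Type*} [Group G] (H K : Subgroup G)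
    [H.FiniteIndex] : Nat.card K ≤ H.index * Nat.card (H ⊓ K : Subgroup G) := by
  have hsplit : H.relIndex K * Nat.card (H.subgroupOf K) = Nat.card K :=
    (H.subgroupOf K).index_mul_card
  have hcard : Nat.card (H.subgroupOf K) = Nat.card (H ⊓ K : Subgroup G) := by
    rw [← inf_subgroupOf_right]
    exact Nat.card_congr (subgroupOfEquivOfLe inf_le_right).toEquiv
  have hrel : H.relIndex K ≤ H.index := by
    simpa only [relIndex_top_right] using
      relIndex_le_of_le_right le_top (by rw [relIndex_top_right]; exact FiniteIndex.index_ne_zero)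
  calc Nat.card K = H.relIndex K * Nat.card (H ⊓ K : Subgroup G) := by rw [← hcard, hsplit]
    _ ≤ H.index * Nat.card (H ⊓ K : Subgroup G) := Nat.mul_le_mul_right _ hrel

theorem Subgroup.index_zpowers_le_of_card_le_mul {G : Type*} [Group G] {x : G} {p : ℕ}
    (hG : Nat.card G ≤ p * orderOf x) (hx : 0 < orderOf x) : (zpowers x).index ≤ p := by
  have h := (zpowers x).index_mul_card
  rw [Nat.card_zpowers] at h
  exact Nat.le_of_mul_le_mul_right (h.trans_le hG) hx

theorem sd_subgroup_card_ge_eight_general {G : Type*} [Group G] [Finite G] (n : ℕ) (x : G)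
    (hG : Nat.card G = 2 ^ n) (hx : orderOf x = 2 ^ (n - 1)) (Q : Subgroup G) (hQ : 8 ≤ Nat.card Q) :
    ∃ g ∈ Q, g ∈ Subgroup.zpowers x ∧ g ≠ 1 ∧ g ≠ x ^ 2 ^ (n - 2) := by
  have hindex : (zpowers x).index ≤ 2 := by
    refine index_zpowers_le_of_card_le_mul ?_ (by rw [hx]; positivity)
    rw [hG, hx, ← pow_succ']
    exact Nat.pow_le_pow_right two_pos (by omega)
  have hinf : 2 < Nat.card (zpowers x ⊓ Q : Subgroup G) := by
    have := ((zpowers x).card_le_index_mul_card_inf Q).trans (Nat.mul_le_mul_right _ hindex)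
    omega
  obtain ⟨g, hg, hg1, hgz⟩ :=
    Set.exists_mem_ne_ne_of_two_lt_ncard (by rwa [← Nat.card_coe_set_eq]) 1 (x ^ 2 ^ (n - 2))
  exact ⟨g, (mem_inf.1 hg).2, (mem_inf.1 hg).1, hg1, hgz⟩

/-- In `SD_{2^n}` (n ≥ 4), every subgroup of order at least 8 contains an element
of `⟨x⟩` other than the identity and the central involution `z = x^(2^(n-2))`. -/
theorem sd_subgroup_card_ge_eight {G : Type*} [Group G] [Finite G] (n : ℕ) (hn : 4 ≤ n) (x y : G)
    (hG : Nat.card G = 2 ^ n) (hx : orderOf x = 2 ^ (n - 1)) (hy : y ^ 2 = 1)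
    (hxy : y⁻¹ * x * y = x ^ (2 ^ (n - 2) - 1)) (Q : Subgroup G) (hQ : 8 ≤ Nat.card Q) :
    ∃ g ∈ Q, g ∈ Subgroup.zpowers x ∧ g ≠ 1 ∧ g ≠ x ^ 2 ^ (n - 2) :=
  sd_subgroup_card_ge_eight_general n x hG hx Q hQ
end

section
/- In the semidihedral group P = SD_{2^n} with n ≥ 4, the cyclic subgroup Q = ⟨xy⟩ has order 4 and satisfies C_P(Q) = Q. -/
/-- In `P = SD_{2^n}` (n ≥ 4), the cyclic subgroup `Q = ⟨xy⟩` has order 4 and is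
self-centralizing. -/
theorem sd_xy_self_centralizing {G : Type*} [Group G] [Finite G] (n : ℕ) (hn : 4 ≤ n) (x y : G)
    (hG : Nat.card G = 2 ^ n) (hx : orderOf x = 2 ^ (n - 1)) (hy : y ^ 2 = 1)
    (hxy : y⁻¹ * x * y = x ^ (2 ^ (n - 2) - 1)) :
    Nat.card (Subgroup.zpowers (x * y)) = 4 ∧
      Subgroup.centralizer ((Subgroup.zpowers (x * y) : Subgroup G) : Set G) =
        Subgroup.zpowers (x * y) := by
  obtain ⟨m, rfl⟩ : ∃ m, n = m + 4 := ⟨n - 4, by omega⟩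
  clear hn
  have h1 : m + 4 - 1 = m + 3 := rfl
  have h2 : m + 4 - 2 = m + 2 := rfl
  rw [h1] at hx
  rw [h2] at hxy
  have hyy : y * y = 1 := by rw [← sq]; exact hy
  have hyi : y⁻¹ = y := inv_eq_of_mul_eq_one_right hyy
  rw [hyi] at hxy
  have hcast : ((2 ^ (m + 3) : ℕ) : ℤ) = (2 : ℤ) ^ (m + 3) := by push_cast; ring
  -- numeric facts
  have h23n : (2:ℕ) ^ (m + 2) < 2 ^ (m + 3) := Nat.pow_lt_pow_right (by norm_num) (by omega)
  have h22n : (4:ℕ) ≤ 2 ^ (m + 2) := by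
    calc (4:ℕ) = 2 ^ 2 := rfl
    _ ≤ 2 ^ (m + 2) := Nat.pow_le_pow_right (by norm_num) (by omega)
  have h23 : ((2:ℤ)) ^ (m + 2) < 2 ^ (m + 3) := by exact_mod_cast h23n
  have h22 : (4:ℤ) ≤ (2:ℤ) ^ (m + 2) := by exact_mod_cast h22n
  -- conjugation formula with integer exponents
  have hr : y * x * y = x ^ ((2 : ℤ) ^ (m + 2) - 1) := by
    rw [hxy, ← zpow_natCast]
    congr 1
    push_cast [Nat.one_le_two_pow]
    ring
  have hconj : ∀ i : ℤ, y * x ^ i * y = x ^ (((2 : ℤ) ^ (m + 2) - 1) * i) := by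
    intro i
    have h := conj_zpow (i := i) (a := y) (b := x)
    rw [hyi] at h
    rw [← h, hr, ← zpow_mul]
  -- key divisibility
  have hdvd : ∀ j : ℤ, ((2 : ℤ) ^ (m + 3)) ∣ j * ((2 : ℤ) ^ (m + 2) - 2) →
      ((2 : ℤ) ^ (m + 2)) ∣ j := by
    intro j hj
    have e1 : j * ((2 : ℤ) ^ (m + 2) - 2) = (j * ((2 : ℤ) ^ (m + 1) - 1)) * 2 := by ring
    have e2 : ((2 : ℤ) ^ (m + 3)) = ((2 : ℤ) ^ (m + 2)) * 2 := by ring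
    rw [e1, e2] at hj
    have hj2 : ((2 : ℤ) ^ (m + 2)) ∣ j * ((2 : ℤ) ^ (m + 1) - 1) :=
      (mul_dvd_mul_iff_right (by norm_num : (2 : ℤ) ≠ 0)).mp hj
    have hcop : IsCoprime ((2 : ℤ)) ((2 : ℤ) ^ (m + 1) - 1) :=
      ⟨2 ^ m, -1, by ring⟩
    exact (hcop.pow_left).dvd_of_dvd_mul_right hj2
  -- (x*y)^2 = x^(2^(m+2))
  have hc2 : (x * y) ^ 2 = x ^ ((2 : ℤ) ^ (m + 2)) := by
    have e : (x * y) ^ 2 = x * (y * x * y) := by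
      rw [sq]; group
    rw [e, hr, ← zpow_one_add]
    congr 1
    ring
  have e2' : ((x * y) : G) ^ (2 : ℤ) = (x * y) ^ (2 : ℕ) := by
    rw [zpow_two, pow_two]
  -- x^(2^(m+2)) ≠ 1
  have hne : x ^ ((2 : ℤ) ^ (m + 2)) ≠ 1 := by
    intro h
    have hd : ((orderOf x : ℤ)) ∣ (2 : ℤ) ^ (m + 2) := orderOf_dvd_iff_zpow_eq_one.mpr h
    rw [hx] at hd
    rw [hcast] at hd
    have hle := Int.le_of_dvd (by linarith) hd
    linarith
  -- order of x*y is 4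
  have hord : orderOf (x * y) = 4 := by
    have h4 : (x * y) ^ (2 ^ 2) = 1 := by
      have e : ((x * y) ^ 2) ^ 2 = x ^ (((2 ^ (m + 3) : ℕ) : ℤ)) := by
        rw [hc2, ← zpow_natCast (x ^ ((2:ℤ) ^ (m + 2))), ← zpow_mul, hcast]
        congr 1
      rw [show (2:ℕ) ^ 2 = 2 * 2 from rfl, pow_mul, e, zpow_natCast, ← hx,
        pow_orderOf_eq_one]
    have h2' : ¬ (x * y) ^ (2 ^ 1) = 1 := by
      rw [pow_one, hc2]; exact hne
    have h := orderOf_eq_prime_pow (p := 2) (n := 1) h2' h4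
    rw [h]; norm_num
  refine ⟨by rw [Nat.card_zpowers, hord], ?_⟩
  -- y is not a power of x
  have hyn : y ∉ Subgroup.zpowers x := by
    intro hmem
    obtain ⟨k, hk⟩ := Subgroup.mem_zpowers_iff.mp hmem
    have hcomm : y * x * y = x := by
      nth_rewrite 1 [← hyi]
      rw [← hk]; group
    rw [hr] at hcomm
    nth_rewrite 2 [← zpow_one x] at hcomm
    rw [zpow_eq_zpow_iff_modEq, hx, hcast] at hcomm
    have hd : ((2:ℤ) ^ (m + 3)) ∣ 1 - ((2 : ℤ) ^ (m + 2) - 1) := hcomm.dvd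
    have hd2 : ((2:ℤ) ^ (m + 3)) ∣ -(1 - ((2 : ℤ) ^ (m + 2) - 1)) := dvd_neg.mpr hd
    have habs := Int.le_of_dvd (by linarith) hd2
    linarith
  -- zpowers x has index two
  have hidx : (Subgroup.zpowers x).index = 2 := by
    have hcm := Subgroup.card_mul_index (Subgroup.zpowers x)
    rw [Nat.card_zpowers, hx, hG] at hcm
    have e : (2:ℕ) ^ (m + 4) = 2 ^ (m + 3) * 2 := by ring
    rw [e] at hcm
    exact Nat.eq_of_mul_eq_mul_left (by positivity) hcm
  have hdecomp : ∀ g : G, g ∈ Subgroup.zpowers x ∨ g * y ∈ Subgroup.zpowers x := by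
    obtain ⟨a, ha⟩ := Subgroup.index_eq_two_iff.mp hidx
    intro g
    have hya : y * a ∈ Subgroup.zpowers x := by
      rcases ha y with ⟨p1, _⟩ | ⟨p1, _⟩
      · exact p1
      · exact absurd p1 hyn
    rcases ha g with ⟨p1, _⟩ | ⟨p1, _⟩
    · right
      have hmem := mul_mem p1 (inv_mem hya)
      have e : g * a * (y * a)⁻¹ = g * y := by
        rw [mul_inv_rev, hyi]; group
      rwa [e] at hmem
    · left; exact p1
  refine le_antisymm ?_ ?_
  · -- centralizer ≤ Q
    intro g hg
    rw [Subgroup.mem_centralizer_iff] at hg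
    have hcomm : (x * y) * g = g * (x * y) :=
      hg (x * y) (Subgroup.mem_zpowers _)
    rcases hdecomp g with hgx | hgx
    · -- g = x ^ i
      obtain ⟨i, hi⟩ := Subgroup.mem_zpowers_iff.mp hgx
      subst hi
      have l1 : x ^ i * (x * y) * y = x ^ (i + 1) := by
        have e : x ^ i * (x * y) * y = x ^ i * x * (y * y) := by group
        rw [e, hyy, mul_one, zpow_add_one]
      have l2 : (x * y) * x ^ i * y = x ^ (1 + ((2:ℤ) ^ (m + 2) - 1) * i) := by
        have e : (x * y) * x ^ i * y = x * (y * x ^ i * y) := by group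
        rw [e, hconj, ← zpow_one_add]
      have key : x ^ (i + 1) = x ^ (1 + ((2:ℤ) ^ (m + 2) - 1) * i) := by
        rw [← l1, ← l2, ← hcomm]
      rw [zpow_eq_zpow_iff_modEq, hx, hcast] at key
      have hd : ((2:ℤ) ^ (m + 3)) ∣ (1 + ((2:ℤ) ^ (m + 2) - 1) * i) - (i + 1) :=
        key.dvd
      have hd2 : ((2:ℤ) ^ (m + 3)) ∣ i * ((2:ℤ) ^ (m + 2) - 2) := by
        have e : i * ((2:ℤ) ^ (m + 2) - 2) =
            (1 + ((2:ℤ) ^ (m + 2) - 1) * i) - (i + 1) := by ring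
        rw [e]; exact hd
      obtain ⟨k, hk⟩ := hdvd i hd2
      refine ⟨2 * k, ?_⟩
      show (x * y) ^ ((2 : ℤ) * k) = x ^ i
      rw [hk, zpow_mul, e2', hc2, ← zpow_mul]
    · -- g = x ^ i * y
      obtain ⟨i, hi⟩ := Subgroup.mem_zpowers_iff.mp hgx
      obtain ⟨i, rfl⟩ : ∃ i : ℤ, g = x ^ i * y := by
        refine ⟨i, ?_⟩
        rw [hi, mul_assoc, hyy, mul_one]
      have l1 : (x * y) * (x ^ i * y) = x ^ (1 + ((2:ℤ) ^ (m + 2) - 1) * i) := by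
        have e : (x * y) * (x ^ i * y) = x * (y * x ^ i * y) := by group
        rw [e, hconj, ← zpow_one_add]
      have l2 : (x ^ i * y) * (x * y) = x ^ (i + ((2:ℤ) ^ (m + 2) - 1)) := by
        have e : (x ^ i * y) * (x * y) = x ^ i * (y * x * y) := by group
        rw [e, hr, ← zpow_add]
      have key : x ^ (1 + ((2:ℤ) ^ (m + 2) - 1) * i) =
          x ^ (i + ((2:ℤ) ^ (m + 2) - 1)) := by
        rw [← l1, hcomm, l2]
      rw [zpow_eq_zpow_iff_modEq, hx, hcast] at key
      have hd : ((2:ℤ) ^ (m + 3)) ∣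
          (i + ((2:ℤ) ^ (m + 2) - 1)) - (1 + ((2:ℤ) ^ (m + 2) - 1) * i) := key.dvd
      have hd2 : ((2:ℤ) ^ (m + 3)) ∣ (i - 1) * ((2:ℤ) ^ (m + 2) - 2) := by
        have e : (i - 1) * ((2:ℤ) ^ (m + 2) - 2) =
            -((i + ((2:ℤ) ^ (m + 2) - 1)) - (1 + ((2:ℤ) ^ (m + 2) - 1) * i)) := by ring
        rw [e]; exact dvd_neg.mpr hd
      obtain ⟨k, hk⟩ := hdvd (i - 1) hd2
      refine ⟨2 * k + 1, ?_⟩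
      show (x * y) ^ ((2 : ℤ) * k + 1) = x ^ i * y
      rw [zpow_add, zpow_one, zpow_mul, e2', hc2, ← zpow_mul, ← hk]
      rw [show x ^ (i - 1) * (x * y) = x ^ (i - 1) * x * y from (mul_assoc _ _ _).symm]
      rw [← zpow_add_one]
      congr 2
      ring
  · -- Q ≤ centralizer
    intro g hg
    rw [Subgroup.mem_centralizer_iff]
    rintro h ⟨a, rfl⟩
    obtain ⟨b, rfl⟩ := hg
    exact zpow_mul_comm (x * y) a b
end

section
/- Every subgroup of the semidihedral group SD_{2^n} (n ≥ 4) that is not equal to the whole group is cyclic, dihedral (possibly Klein four), or generalized quaternion. -/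
/-!
Let `N = ⟨x⟩`, a subgroup of index 2. A subgroup `Q ≤ N` is cyclic. Otherwise pick `t ∈ Q \ N`:
then `Q ∩ N = ⟨a⟩` has index 2 in `Q`, and as `Q` is proper, the order of `a` divides `2^(n-2)`.
Every element outside `N` acts on the abelian group `N` as `y` does, by `g ↦ g^(2^(n-2)-1)`,
which is inversion on `⟨a⟩`.

A finite group with a cyclic subgroup `⟨a⟩` of index 2 and an element `t` outside it inverting `a`
is cyclic, dihedral or generalized quaternion: `t^2 ∈ ⟨a⟩` is `1` or the involution of `⟨a⟩`, and
these relations define homomorphisms from the dihedral, resp. quaternion group, which are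
injective and hence bijective by counting.
-/

open Subgroup

section PowZModVal

theorem pow_zmod_val_add {M : Type*} [Monoid M] {n : ℕ} [NeZero n] {a : M} (ha : a ^ n = 1)
    (i j : ZMod n) : a ^ (i + j).val = a ^ i.val * a ^ j.val := by
  rw [ZMod.val_add, ← pow_eq_pow_mod _ ha, pow_add]

theorem pow_zmod_val_natCast {M : Type*} [Monoid M] {n : ℕ} {a : M} (ha : a ^ n = 1) (k : ℕ) :
    a ^ (k : ZMod n).val = a ^ k := by
  rw [ZMod.val_natCast, ← pow_eq_pow_mod _ ha]

variable {G : Type*} [Group G] {n : ℕ} [NeZero n] {a : G}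

theorem pow_zmod_val_sub (ha : a ^ n = 1) (i j : ZMod n) :
    a ^ (j - i).val = (a ^ i.val)⁻¹ * a ^ j.val := by
  rw [eq_inv_mul_iff_mul_eq, ← pow_zmod_val_add ha, add_sub_cancel]

theorem eq_zero_of_pow_zmod_val_eq_one (ha : orderOf a = n) {i : ZMod n} (h : a ^ i.val = 1) :
    i = 0 := by
  have hdvd := orderOf_dvd_of_pow_eq_one h
  rw [ha] at hdvd
  rw [← ZMod.val_eq_zero]
  exact Nat.eq_zero_of_dvd_of_lt hdvd (ZMod.val_lt i)

end PowZModVal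

section Conj

variable {G : Type*} [Group G] {a t : G}

theorem inv_mul_mul_eq_zpow_of_mem_zpowers {k : ℤ} (h : t⁻¹ * a * t = a ^ k) {g : G}
    (hg : g ∈ zpowers a) : t⁻¹ * g * t = g ^ k := by
  obtain ⟨w, rfl⟩ := mem_zpowers_iff.mp hg
  have h' : (t⁻¹ * a * t⁻¹⁻¹) ^ w = t⁻¹ * a ^ w * t⁻¹⁻¹ := conj_zpow
  rw [inv_inv] at h'
  rw [← h', h, ← zpow_mul, ← zpow_mul, mul_comm]

theorem inv_mul_mul_eq_inv_of_mem_zpowers (h : t⁻¹ * a * t = a⁻¹) {g : G}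
    (hg : g ∈ zpowers a) : t⁻¹ * g * t = g⁻¹ := by
  rw [← zpow_neg_one a] at h
  rw [← zpow_neg_one g]
  exact inv_mul_mul_eq_zpow_of_mem_zpowers h hg

theorem pow_mul_eq_mul_inv_of_inv_mul_mul_eq_inv (h : t⁻¹ * a * t = a⁻¹) (k : ℕ) :
    a ^ k * t = t * (a ^ k)⁻¹ := by
  rw [← inv_mul_mul_eq_inv_of_mem_zpowers h (pow_mem (mem_zpowers a) k)]
  group

end Conj

namespace DihedralGroup

variable {G : Type*} [Group G] {n : ℕ} [NeZero n] {a t : G}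

def lift (ha : a ^ n = 1) (ht : t ^ 2 = 1) (hta : t⁻¹ * a * t = a⁻¹) :
    DihedralGroup n →* G where
  toFun
    | r i => a ^ i.val
    | sr i => t * a ^ i.val
  map_one' := by
    show a ^ (0 : ZMod n).val = 1
    rw [ZMod.val_zero, pow_zero]
  map_mul' := by
    have hswap := pow_mul_eq_mul_inv_of_inv_mul_mul_eq_inv hta
    rintro (i | i) (j | j)
    · exact pow_zmod_val_add ha i j
    · show t * a ^ (j - i).val = a ^ i.val * (t * a ^ j.val)
      rw [pow_zmod_val_sub ha, ← mul_assoc, ← mul_assoc, hswap]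
    · show t * a ^ (i + j).val = t * a ^ i.val * a ^ j.val
      rw [pow_zmod_val_add ha, mul_assoc]
    · show a ^ (j - i).val = t * a ^ i.val * (t * a ^ j.val)
      rw [pow_zmod_val_sub ha, ← mul_assoc, mul_assoc t, hswap, ← mul_assoc, ← sq, ht,
        one_mul]

theorem nonempty_mulEquiv (hcard : Nat.card G = 2 * n) (ha : orderOf a = n) (ht : t ^ 2 = 1)
    (hta : t⁻¹ * a * t = a⁻¹) (htA : t ∉ zpowers a) : Nonempty (G ≃* DihedralGroup n) := by
  have : Finite G := Nat.finite_of_card_ne_zero (by simp [hcard, NeZero.ne n])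
  let f := lift (ha ▸ pow_orderOf_eq_one a) ht hta
  have hf : Function.Injective f := by
    refine (injective_iff_map_eq_one f).mpr ?_
    rintro (i | i) h
    · rw [eq_zero_of_pow_zmod_val_eq_one ha h, r_zero]
    · exact (htA (eq_inv_of_mul_eq_one_left h ▸ inv_mem (pow_mem (mem_zpowers a) _))).elim
  exact ⟨(MulEquiv.ofBijective f
    (hf.bijective_of_nat_card_le (by rw [hcard, nat_card]))).symm⟩

end DihedralGroup

namespace QuaternionGroup

variable {G : Type*} [Group G] {n : ℕ} [NeZero n] {x t : G}

def lift (hx : x ^ (2 * n) = 1) (ht : t ^ 2 = x ^ n) (htx : t⁻¹ * x * t = x⁻¹) :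
    QuaternionGroup n →* G where
  toFun
    | a i => x ^ i.val
    | xa i => t * x ^ i.val
  map_one' := by
    show x ^ (0 : ZMod (2 * n)).val = 1
    rw [ZMod.val_zero, pow_zero]
  map_mul' := by
    have hswap := pow_mul_eq_mul_inv_of_inv_mul_mul_eq_inv htx
    rintro (i | i) (j | j)
    · exact pow_zmod_val_add hx i j
    · show t * x ^ (j - i).val = x ^ i.val * (t * x ^ j.val)
      rw [pow_zmod_val_sub hx, ← mul_assoc, ← mul_assoc, hswap]
    · show t * x ^ (i + j).val = t * x ^ i.val * x ^ j.val
      rw [pow_zmod_val_add hx, mul_assoc]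
    · show x ^ ((n : ZMod (2 * n)) + j - i).val = t * x ^ i.val * (t * x ^ j.val)
      rw [add_sub_assoc, pow_zmod_val_add hx, pow_zmod_val_natCast hx, pow_zmod_val_sub hx,
        ← ht, sq, mul_assoc, ← mul_assoc t (x ^ i.val)⁻¹, ← hswap]
      simp only [mul_assoc]

theorem nonempty_mulEquiv (hcard : Nat.card G = 4 * n) (hx : orderOf x = 2 * n)
    (ht : t ^ 2 = x ^ n) (htx : t⁻¹ * x * t = x⁻¹) (htX : t ∉ zpowers x) :
    Nonempty (G ≃* QuaternionGroup n) := by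
  have : Finite G := Nat.finite_of_card_ne_zero (by simp [hcard, NeZero.ne n])
  let f := lift (hx ▸ pow_orderOf_eq_one x) ht htx
  have hf : Function.Injective f := by
    refine (injective_iff_map_eq_one f).mpr ?_
    rintro (i | i) h
    · rw [eq_zero_of_pow_zmod_val_eq_one hx h, a_zero]
    · exact (htX (eq_inv_of_mul_eq_one_left h ▸ inv_mem (pow_mem (mem_zpowers x) _))).elim
  exact ⟨(MulEquiv.ofBijective f (hf.bijective_of_nat_card_le (by
    rw [hcard, Nat.card_eq_fintype_card, card]))).symm⟩

end QuaternionGroup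

section IndexTwo

variable {G : Type*} [Group G]

theorem card_eq_two_mul_orderOf_of_index_zpowers_eq_two {a : G} (ha : (zpowers a).index = 2) :
    Nat.card G = 2 * orderOf a := by
  rw [← (zpowers a).index_mul_card, ha, Nat.card_zpowers]

theorem exists_orderOf_eq_two_mul_and_eq_pow {a b : G} (ha : IsOfFinOrder a)
    (hb : b ∈ zpowers a) (hb1 : b ≠ 1) (hb2 : b ^ 2 = 1) :
    ∃ m, orderOf a = 2 * m ∧ b = a ^ m := by
  obtain ⟨m, hm⟩ : 2 ∣ orderOf a := orderOf_eq_prime hb2 hb1 ▸ orderOf_dvd_of_mem_zpowers hb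
  obtain ⟨j, rfl⟩ := (Submonoid.mem_powers_iff _ _).mp (ha.mem_powers_iff_mem_zpowers.mpr hb)
  obtain ⟨q, rfl⟩ : m ∣ j := by
    refine Nat.dvd_of_mul_dvd_mul_left two_pos (hm ▸ orderOf_dvd_of_pow_eq_one ?_)
    rw [mul_comm, pow_mul, hb2]
  have ha2m : a ^ (2 * m) = 1 := hm ▸ pow_orderOf_eq_one a
  refine ⟨m, hm, ?_⟩
  obtain ⟨r, rfl | rfl⟩ := Nat.even_or_odd' q
  · exact absurd (by rw [← mul_assoc, mul_comm m 2, pow_mul, ha2m, one_pow]) hb1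
  · rw [mul_add, mul_one, pow_add, ← mul_assoc, mul_comm m 2, pow_mul, ha2m, one_pow, one_mul]

theorem isCyclic_or_dihedral_or_quaternion_of_index_zpowers_eq_two [Finite G] {a t : G}
    (ha : (zpowers a).index = 2) (htA : t ∉ zpowers a) (hta : t⁻¹ * a * t = a⁻¹) :
    IsCyclic G ∨ (∃ m : ℕ, 2 ≤ m ∧ Nonempty (G ≃* DihedralGroup m)) ∨
      (∃ m : ℕ, 2 ≤ m ∧ Nonempty (G ≃* QuaternionGroup m)) := by
  have hcard := card_eq_two_mul_orderOf_of_index_zpowers_eq_two ha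
  have ht2A : t ^ 2 ∈ zpowers a := sq_mem_of_index_two ha t
  -- `t ^ 2` commutes with `t`, which inverts `zpowers a`; so `t ^ 2 = t⁻¹ * t ^ 2 * t = (t ^ 2)⁻¹`
  have ht4 : (t ^ 2) ^ 2 = 1 := by
    have h := inv_mul_mul_eq_inv_of_mem_zpowers hta ht2A
    rw [sq (t ^ 2), mul_eq_one_iff_eq_inv, ← h]
    group
  by_cases ht1 : t ^ 2 = 1
  · obtain h1 | h1 := eq_or_ne (orderOf a) 1
    · exact Or.inl (isCyclic_of_prime_card (p := 2) (by rw [hcard, h1]))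
    · have hpos := orderOf_pos a
      have : NeZero (orderOf a) := ⟨hpos.ne'⟩
      exact Or.inr (Or.inl ⟨orderOf a, by omega,
        DihedralGroup.nonempty_mulEquiv hcard rfl ht1 hta htA⟩)
  · obtain ⟨m, hm, ht2⟩ :=
      exists_orderOf_eq_two_mul_and_eq_pow (isOfFinOrder_of_finite a) ht2A ht1 ht4
    have hpos : 0 < m := by have := orderOf_pos a; omega
    obtain rfl | h1 := eq_or_ne m 1
    · refine Or.inl (isCyclic_of_orderOf_eq_card t ?_)
      rw [hcard, hm]
      exact orderOf_eq_prime_pow (p := 2) (n := 1) (by rwa [pow_one])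
        (by simpa [← pow_mul] using ht4)
    · have : NeZero m := ⟨hpos.ne'⟩
      exact Or.inr (Or.inr ⟨m, by omega,
        QuaternionGroup.nonempty_mulEquiv (by rw [hcard, hm]; ring) hm ht2 hta htA⟩)

end IndexTwo

section Subgroups

variable {G : Type*} [Group G]

theorem card_dvd_prime_pow_pred_of_ne_top {p n : ℕ} (hp : p.Prime) (hG : Nat.card G = p ^ n)
    {H : Subgroup G} (hH : H ≠ ⊤) : Nat.card H ∣ p ^ (n - 1) := by
  have : Finite G := Nat.finite_of_card_ne_zero (by simp [hG, hp.ne_zero])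
  obtain ⟨k, hk, hHk⟩ := (Nat.dvd_prime_pow hp).mp (hG ▸ H.card_subgroup_dvd_card)
  have hkn : k ≠ n := fun h => hH (H.eq_top_of_card_eq (by rw [hHk, h, hG]))
  rw [hHk]
  exact Nat.pow_dvd_pow p (by omega)

theorem relIndex_eq_two_of_index_eq_two {H K : Subgroup G} (hH : H.index = 2) (hK : ¬K ≤ H) :
    H.relIndex K = 2 := by
  have := normal_of_index_eq_two hH
  rcases (Nat.dvd_prime Nat.prime_two).mp (hH ▸ H.relIndex_dvd_index_of_normal K) with h | h
  · exact absurd (relIndex_eq_one.mp h) hK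
  · exact h

theorem isCyclic_subgroupOf {H : Subgroup G} [IsCyclic H] (K : Subgroup G) :
    IsCyclic (H.subgroupOf K) := by
  have := isCyclic_of_le (inf_le_left : H ⊓ K ≤ H)
  rw [← inf_subgroupOf_right]
  exact isCyclic_of_surjective _ (subgroupOfEquivOfLe inf_le_right).symm.surjective

theorem inv_mul_mul_eq_zpow_of_notMem_zpowers {x y t g : G} {k : ℤ}
    (hx : (zpowers x).index = 2) (hy : y ∉ zpowers x) (hyx : y⁻¹ * x * y = x ^ k)
    (ht : t ∉ zpowers x) (hg : g ∈ zpowers x) : t⁻¹ * g * t = g ^ k := by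
  obtain ⟨i, hi⟩ := mem_zpowers_iff.mp <|
    (mul_mem_iff_of_index_two hx).mpr (iff_of_false (inv_mem_iff.not.mpr hy) ht)
  obtain ⟨j, hj⟩ := mem_zpowers_iff.mp (zpow_mem hg k)
  calc t⁻¹ * g * t = (y⁻¹ * t)⁻¹ * (y⁻¹ * g * y) * (y⁻¹ * t) := by group
    _ = g ^ k := by rw [inv_mul_mul_eq_zpow_of_mem_zpowers hyx hg, ← hi, ← hj]; group

end Subgroups

section Semidihedral

variable {G : Type*} [Group G] {n : ℕ} {x y : G}

theorem index_zpowers_eq_two (hG : Nat.card G = 2 ^ n) (hx : orderOf x = 2 ^ (n - 1))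
    (hn : 1 ≤ n) : (zpowers x).index = 2 := by
  have h := (zpowers x).index_mul_card
  rw [Nat.card_zpowers, hx, hG, ← Nat.sub_add_cancel hn, pow_succ', Nat.add_sub_cancel] at h
  exact Nat.eq_of_mul_eq_mul_right (by positivity) h

theorem notMem_zpowers_of_inv_mul_mul_eq_pow (hn : 4 ≤ n) (hx : orderOf x = 2 ^ (n - 1))
    (hxy : y⁻¹ * x * y = x ^ (2 ^ (n - 2) - 1)) : y ∉ zpowers x := by
  intro hy
  obtain ⟨i, rfl⟩ := mem_zpowers_iff.mp hy
  have hP : 2 ^ (n - 1) = 2 * 2 ^ (n - 2) := by rw [← pow_succ']; congr 1; omega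
  have hP4 : 2 ^ 2 ≤ 2 ^ (n - 2) := Nat.pow_le_pow_right two_pos (by omega)
  have h : x ^ (2 ^ (n - 2) - 2) * x = x := by
    rw [← pow_succ, show 2 ^ (n - 2) - 2 + 1 = 2 ^ (n - 2) - 1 by omega, ← hxy]
    group
  have hdvd := orderOf_dvd_of_pow_eq_one (mul_eq_right.mp h)
  rw [hx, hP] at hdvd
  have := Nat.eq_zero_of_dvd_of_lt hdvd (by omega)
  omega

end Semidihedral

theorem sd_proper_subgroups_general {G : Type*} [Group G] [Finite G] (n : ℕ) (hn : 4 ≤ n) (x y : G)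
    (hG : Nat.card G = 2 ^ n) (hx : orderOf x = 2 ^ (n - 1))
    (hxy : y⁻¹ * x * y = x ^ (2 ^ (n - 2) - 1)) (Q : Subgroup G) (hQ : Q ≠ ⊤) :
    IsCyclic Q ∨ (∃ m : ℕ, 2 ≤ m ∧ Nonempty (Q ≃* DihedralGroup m)) ∨
      (∃ m : ℕ, 2 ≤ m ∧ Nonempty (Q ≃* QuaternionGroup m)) := by
  have hN := index_zpowers_eq_two hG hx (by omega)
  by_cases hQN : Q ≤ zpowers x
  · exact Or.inl (isCyclic_of_le hQN)
  obtain ⟨t, htQ, htN⟩ := SetLike.not_le_iff_exists.mp hQN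
  obtain ⟨a, ha⟩ := ((zpowers x).subgroupOf Q).isCyclic_iff_exists_zpowers_eq_top.mp
    (isCyclic_subgroupOf Q)
  have haQ : (zpowers a).index = 2 := ha ▸ relIndex_eq_two_of_index_eq_two hN hQN
  have haN : (a : G) ∈ zpowers x := mem_subgroupOf.mp (ha ▸ mem_zpowers a)
  have ha1 : (a : G) ^ 2 ^ (n - 2) = 1 := by
    have h := card_dvd_prime_pow_pred_of_ne_top Nat.prime_two hG hQ
    rw [card_eq_two_mul_orderOf_of_index_zpowers_eq_two haQ, ← Subgroup.orderOf_coe,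
      show n - 1 = n - 2 + 1 by omega, pow_succ', Nat.mul_dvd_mul_iff_left two_pos] at h
    exact orderOf_dvd_iff_pow_eq_one.mp h
  have hta : t⁻¹ * a * t = (a : G)⁻¹ := by
    rw [inv_mul_mul_eq_zpow_of_notMem_zpowers (k := (2 ^ (n - 2) - 1 : ℕ)) hN
      (notMem_zpowers_of_inv_mul_mul_eq_pow hn hx hxy) (by rw [hxy, zpow_natCast]) htN haN,
      zpow_natCast]
    exact eq_inv_of_mul_eq_one_left <| by
      rw [← pow_succ, Nat.sub_add_cancel Nat.one_le_two_pow, ha1]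
  exact isCyclic_or_dihedral_or_quaternion_of_index_zpowers_eq_two haQ (t := ⟨t, htQ⟩)
    (fun h => htN (mem_subgroupOf.mp (ha ▸ h))) (Subtype.ext (by simpa using hta))

/-- Every proper subgroup of `SD_{2^n}` (n ≥ 4) is cyclic, dihedral (possibly
Klein four, i.e. `DihedralGroup m` with `m ≥ 2`), or generalized quaternion. -/
theorem sd_proper_subgroups {G : Type*} [Group G] [Finite G] (n : ℕ) (hn : 4 ≤ n) (x y : G)
    (hG : Nat.card G = 2 ^ n) (hx : orderOf x = 2 ^ (n - 1)) (hy : y ^ 2 = 1)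
    (hxy : y⁻¹ * x * y = x ^ (2 ^ (n - 2) - 1)) (Q : Subgroup G) (hQ : Q ≠ ⊤) :
    IsCyclic Q ∨ (∃ m : ℕ, 2 ≤ m ∧ Nonempty (Q ≃* DihedralGroup m)) ∨
      (∃ m : ℕ, 2 ≤ m ∧ Nonempty (Q ≃* QuaternionGroup m)) :=
  sd_proper_subgroups_general n hn x y hG hx hxy Q hQ
end

section
/- Let G be a finite group and Q a normal 2-subgroup of G with G/Q ≅ S3. If there exists an involution t ∈ G \ Q, then G has a subgroup H with t ∈ H and H ≅ S3. -/
set_option maxRecDepth 4000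

private lemma aux1 : ∀ B : Equiv.Perm (Fin 3), B ≠ 1 → B ^ 2 = 1 →
    ∃ u : Equiv.Perm (Fin 3), u * B * u⁻¹ ≠ B := by decide

private lemma aux2 : ∀ B u : Equiv.Perm (Fin 3), B ≠ 1 → B ^ 2 = 1 → u * B * u⁻¹ ≠ B →
    (B * (u * B * u⁻¹)) ^ 3 = 1 ∧ B * (u * B * u⁻¹) ≠ 1 := by decide

private lemma aux3 : ∀ A B : Equiv.Perm (Fin 3), A ≠ 1 → A ^ 3 = 1 → B ≠ 1 → B ^ 2 = 1 →
    ∀ w : Equiv.Perm (Fin 3),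
      w = 1 ∨ w = A ∨ w = A * A ∨ w = B ∨ w = A * B ∨ w = A * A * B := by decide

/-- If `Q` is a normal 2-subgroup of a finite group `G` with `G/Q ≅ S3`, and
`t ∈ G \ Q` is an involution, then `G` has a subgroup `H ≅ S3` containing `t`. -/
theorem exists_s3_subgroup {G : Type*} [Group G] [Finite G] (Q : Subgroup G)
    [Q.Normal] (hQ : IsPGroup 2 Q)
    (hquot : Nonempty ((G ⧸ Q) ≃* Equiv.Perm (Fin 3)))
    (t : G) (ht : t ∉ Q) (ht2 : t ^ 2 = 1) :
    ∃ H : Subgroup G, t ∈ H ∧ Nonempty (H ≃* Equiv.Perm (Fin 3)) := by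
  obtain ⟨e⟩ := hquot
  set σ : G →* Equiv.Perm (Fin 3) := e.toMonoidHom.comp (QuotientGroup.mk' Q) with hσdef
  have hker : ∀ g : G, σ g = 1 ↔ g ∈ Q := by
    intro g
    have : σ g = e ((g : G ⧸ Q)) := rfl
    rw [this, MulEquiv.map_eq_one_iff, QuotientGroup.eq_one_iff]
  have hsurj : Function.Surjective σ := by
    intro w
    obtain ⟨q, hq⟩ := e.surjective w
    obtain ⟨g, hg⟩ := QuotientGroup.mk'_surjective Q q
    exact ⟨g, by rw [← hq, ← hg]; rfl⟩
  have htinv : t⁻¹ = t := by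
    rw [inv_eq_iff_mul_eq_one, ← pow_two, ht2]
  have hBne : σ t ≠ 1 := fun h => ht ((hker t).mp h)
  have hB2 : (σ t) ^ 2 = 1 := by rw [← map_pow, ht2, map_one]
  obtain ⟨u, hu⟩ := aux1 (σ t) hBne hB2
  obtain ⟨g, hg⟩ := hsurj u
  set s : G := g * t * g⁻¹ with hsdef
  have hsσ : σ s = u * σ t * u⁻¹ := by
    simp [hsdef, map_mul, map_inv, hg]
  set x : G := t * s with hxdef
  obtain ⟨hx3σ, hxneσ⟩ := aux2 (σ t) u hBne hB2 hu
  have hxσ : σ x = σ t * (u * σ t * u⁻¹) := by rw [hxdef, map_mul, hsσ]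
  -- conjugation by t inverts x
  have hsinv : s⁻¹ = s := by
    rw [hsdef]
    rw [inv_eq_iff_mul_eq_one]
    calc g * t * g⁻¹ * (g * t * g⁻¹) = g * (t * (g⁻¹ * g) * t) * g⁻¹ := by group
    _ = 1 := by rw [inv_mul_cancel, mul_one, ← pow_two, ht2, mul_one, mul_inv_cancel]
  have htxt : t * x * t⁻¹ = x⁻¹ := by
    rw [hxdef, htinv, mul_inv_rev, hsinv, htinv]
    calc t * (t * s) * t = (t * t) * s * t := by group
    _ = s * t := by rw [← pow_two, ht2, one_mul]
  -- x^3 lies in Q, kill its 2-part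
  have hx3Q : x ^ 3 ∈ Q := by
    rw [← hker, map_pow, hxσ, hx3σ]
  obtain ⟨m, hm⟩ := hQ ⟨x ^ 3, hx3Q⟩
  have hxm : (x ^ 3) ^ 2 ^ m = 1 := by
    have := congrArg (Subgroup.subtype Q) hm
    simpa using this
  set z : G := x ^ 2 ^ m with hzdef
  have hz3 : z ^ 3 = 1 := by
    rw [hzdef, ← pow_mul, Nat.mul_comm, pow_mul, hxm]
  have hzσ : σ z = (σ x) ^ 2 ^ m := by rw [hzdef, map_pow]
  have fact3 : Fact (Nat.Prime 3) := ⟨by norm_num⟩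
  have fact2 : Fact (Nat.Prime 2) := ⟨by norm_num⟩
  have hxord : orderOf (σ x) = 3 := by
    rw [hxσ]
    exact orderOf_eq_prime hx3σ hxneσ
  have hAne : σ z ≠ 1 := by
    intro h
    rw [hzσ, ← orderOf_dvd_iff_pow_eq_one, hxord] at h
    have := Nat.Prime.dvd_of_dvd_pow (by norm_num : Nat.Prime 3) h
    omega
  have htzt : t * z * t⁻¹ = z⁻¹ := by
    rw [hzdef, ← inv_pow, ← htxt, conj_pow]
  -- key commutation: t * z^c = z^(-c) * t  (for integer c)
  have hcomm : ∀ c : ℤ, t * z ^ c = z ^ (-c) * t := by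
    intro c
    have h1 : (t * z * t⁻¹) ^ c = t * z ^ c * t⁻¹ := conj_zpow
    rw [htzt, inv_zpow'] at h1
    rw [h1, inv_mul_cancel_right]
  have hteven : ∀ k : ℤ, t ^ (2 * k) = 1 := by
    intro k
    rw [zpow_mul]
    norm_cast
    rw [ht2, one_zpow]
  have htzpow : ∀ b : ℤ, t ^ b = 1 ∨ t ^ b = t := by
    intro b
    rcases Int.even_or_odd b with ⟨k, hk⟩ | ⟨k, hk⟩
    · left
      rw [hk, show k + k = 2 * k by ring, hteven]
    · right
      rw [hk, zpow_add, hteven, one_mul, zpow_one]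
  set H : Subgroup G := Subgroup.closure {z, t} with hHdef
  have hzH : z ∈ H := Subgroup.subset_closure (by left; rfl)
  have htH : t ∈ H := Subgroup.subset_closure (by right; rfl)
  -- every element of H is z^i * t^j
  have hrep : ∀ h : G, h ∈ H → ∃ i j : ℤ, h = z ^ i * t ^ j := by
    intro h hh
    refine Subgroup.closure_induction (fun w hw => ?_) ⟨0, 0, by simp⟩
      (fun w v _ _ ⟨a, b, hab⟩ ⟨c, d, hcd⟩ => ?_) (fun w _ ⟨a, b, hab⟩ => ?_) hh
    · rcases hw with hw | hw
      · exact ⟨1, 0, by simp [hw]⟩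
      · exact ⟨0, 1, by simp [Set.mem_singleton_iff.mp hw]⟩
    · rcases htzpow b with hb | hb
      · refine ⟨a + c, b + d, ?_⟩
        have e1 : t ^ b * z ^ c = z ^ c * t ^ b := by rw [hb, one_mul, mul_one]
        calc w * v = z ^ a * (t ^ b * z ^ c) * t ^ d := by rw [hab, hcd]; group
        _ = z ^ a * (z ^ c * t ^ b) * t ^ d := by rw [e1]
        _ = z ^ (a + c) * t ^ (b + d) := by rw [zpow_add, zpow_add]; group
      · refine ⟨a - c, b + d, ?_⟩
        have e1 : t ^ b * z ^ c = z ^ (-c) * t ^ b := by rw [hb]; exact hcomm c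
        calc w * v = z ^ a * (t ^ b * z ^ c) * t ^ d := by rw [hab, hcd]; group
        _ = z ^ a * (z ^ (-c) * t ^ b) * t ^ d := by rw [e1]
        _ = z ^ (a - c) * t ^ (b + d) := by
            rw [sub_eq_add_neg, zpow_add, zpow_add]; group
    · have e0 : w⁻¹ = t ^ (-b) * z ^ (-a) := by
        rw [hab, mul_inv_rev, ← zpow_neg, ← zpow_neg]
      rcases htzpow (-b) with hb | hb
      · refine ⟨-a, -b, ?_⟩
        rw [e0, hb]
        simp
      · refine ⟨a, -b, ?_⟩
        have e1 : t ^ (-b) * z ^ (-a) = z ^ a * t ^ (-b) := by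
          rw [hb]
          simpa using hcomm (-a)
        rw [e0, e1]
  -- the restricted map
  set f : H →* Equiv.Perm (Fin 3) := σ.comp H.subtype with hfdef
  have hfz : ∀ (w : G) (hw : w ∈ H), f ⟨w, hw⟩ = σ w := fun _ _ => rfl
  have hA3 : (σ z) ^ 3 = 1 := by rw [← map_pow, hz3, map_one]
  have hAord : orderOf (σ z) = 3 := orderOf_eq_prime hA3 hAne
  have hBord : orderOf (σ t) = 2 := orderOf_eq_prime hB2 hBne
  have hinj : Function.Injective f := by
    rw [injective_iff_map_eq_one]
    rintro ⟨h, hh⟩ hf1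
    obtain ⟨i, j, hij⟩ := hrep h hh
    rw [hfz h hh] at hf1
    rw [hij, map_mul, map_zpow, map_zpow] at hf1
    -- (σ z)^i * (σ t)^j = 1
    have hBj : (σ t) ^ j = ((σ z) ^ i)⁻¹ := eq_inv_of_mul_eq_one_right hf1
    have hsq : ((σ t) ^ j) ^ (2 : ℤ) = 1 := by
      rw [← zpow_mul, mul_comm j 2, zpow_mul]
      norm_cast
      rw [hB2, one_zpow]
    have h2 : (σ z) ^ (i * 2) = 1 := by
      rw [hBj, inv_zpow, inv_eq_one, ← zpow_mul] at hsq
      exact hsq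
    have h3i : (3 : ℤ) ∣ i := by
      rw [← orderOf_dvd_iff_zpow_eq_one, hAord] at h2
      omega
    have hzi : z ^ i = 1 := by
      obtain ⟨k, hk⟩ := h3i
      rw [hk, zpow_mul]
      norm_cast
      rw [hz3, one_zpow]
    have hBj1 : (σ t) ^ j = 1 := by
      have : σ (z ^ i) = 1 := by rw [hzi, map_one]
      rw [map_zpow] at this
      rwa [this, one_mul] at hf1
    have h2j : (2 : ℤ) ∣ j := by
      rwa [← orderOf_dvd_iff_zpow_eq_one, hBord] at hBj1
    have htj : t ^ j = 1 := by
      obtain ⟨k, hk⟩ := h2j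
      rw [hk, zpow_mul]
      norm_cast
      rw [ht2, one_zpow]
    ext
    simp [hij, hzi, htj]
  have hfsurj : Function.Surjective f := by
    intro w
    rcases aux3 (σ z) (σ t) hAne hA3 hBne hB2 w with h | h | h | h | h | h
    · exact ⟨1, by rw [map_one, h]⟩
    · exact ⟨⟨z, hzH⟩, by rw [hfz, h]⟩
    · exact ⟨⟨z * z, mul_mem hzH hzH⟩, by rw [hfz, map_mul, h]⟩
    · exact ⟨⟨t, htH⟩, by rw [hfz, h]⟩
    · exact ⟨⟨z * t, mul_mem hzH htH⟩, by rw [hfz, map_mul, h]⟩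
    · exact ⟨⟨z * z * t, mul_mem (mul_mem hzH hzH) htH⟩, by
        rw [hfz, map_mul, map_mul, h]⟩
  exact ⟨H, htH, ⟨MulEquiv.ofBijective f ⟨hinj, hfsurj⟩⟩⟩
end
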